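/- Let W1 and W2 be B-DMCs with finite output alphabets Y1 and Y2, and let (W⁻, W⁺) be their irregular kernel transform. Then I(W⁻) + I(W⁺) = I(W1) + I(W2). -/

import Mathlib

/-! With a uniform input `X`, `I(W) = H(X) + H(Y) - H(X, Y)` with `H(X)` one bit. The output law of
`W⁻` is the product of the output laws of `W₁` and `W₂`; the output law of `W⁺` is the joint law
of `W⁻`; and after the bijection `(u₁, u₂) ↦ (u₁ + u₂, u₂)` the joint law of `W⁺` is the product
of the joint laws of `W₁` and `W₂`. Entropy is additive on products of probability vectors, so
in `I(W⁻) + I(W⁺)` the entropy of the joint law of `W⁻` cancels and what is left is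
`I(W₁) + I(W₂)`. -/

open Finset Real

/-- A binary-input discrete memoryless channel (B-DMC): nonnegative entries
and each row (fixed input) sums to 1. -/
def IsBDMC {Y : Type*} [Fintype Y] (W : Y → ZMod 2 → ℝ) : Prop :=
  (∀ y x, 0 ≤ W y x) ∧ (∀ x, ∑ y, W y x = 1)

/-- Symmetric capacity I(W). -/
noncomputable def symCap {Y : Type*} [Fintype Y] (W : Y → ZMod 2 → ℝ) : ℝ :=
  ∑ y, ∑ x : ZMod 2,
    (1 / 2) * W y x * Real.logb 2 (W y x / ((1 / 2) * (W y 0 + W y 1)))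

/-- The minus-channel W⁻ of the irregular kernel transform. -/
noncomputable def Wminus {Y1 Y2 : Type*} (W1 : Y1 → ZMod 2 → ℝ)
    (W2 : Y2 → ZMod 2 → ℝ) : Y1 × Y2 → ZMod 2 → ℝ :=
  fun y u1 => ∑ u2 : ZMod 2, (1 / 2) * W1 y.1 (u1 + u2) * W2 y.2 u2

/-- The plus-channel W⁺ of the irregular kernel transform. -/
noncomputable def Wplus {Y1 Y2 : Type*} (W1 : Y1 → ZMod 2 → ℝ)
    (W2 : Y2 → ZMod 2 → ℝ) : Y1 × Y2 × ZMod 2 → ZMod 2 → ℝ :=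
  fun y u2 => (1 / 2) * W1 y.1 (y.2.2 + u2) * W2 y.2.1 u2

section Entropy

variable {α β : Type*} [Fintype α] [Fintype β]

/-- Shannon entropy in nats; `p` need not be normalised. -/
noncomputable def entropy (p : α → ℝ) : ℝ := ∑ a, negMulLog (p a)

lemma entropy_mul (p : α → ℝ) (q : β → ℝ) :
    entropy (fun x : α × β => p x.1 * q x.2)
      = (∑ b, q b) * entropy p + (∑ a, p a) * entropy q := by
  simp only [entropy, Fintype.sum_prod_type, negMulLog_mul, sum_add_distrib, ← mul_sum,
    ← sum_mul]

lemma entropy_mul_of_sum_eq_one {p : α → ℝ} {q : β → ℝ} (hp : ∑ a, p a = 1)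
    (hq : ∑ b, q b = 1) :
    entropy (fun x : α × β => p x.1 * q x.2) = entropy p + entropy q := by
  rw [entropy_mul, hp, hq, one_mul, one_mul]

lemma entropy_comp_equiv (e : α ≃ β) (p : β → ℝ) : entropy (p ∘ e) = entropy p :=
  e.sum_comp (fun b => negMulLog (p b))

end Entropy

lemma sum_zmod_two {M : Type*} [AddCommMonoid M] (f : ZMod 2 → M) : ∑ x, f x = f 0 + f 1 :=
  Fin.sum_univ_two f

lemma mul_log_div_of_ne_zero {p q : ℝ} (h : p ≠ 0 → q ≠ 0) :
    p * log (p / q) = -negMulLog p - p * log q := by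
  rcases eq_or_ne p 0 with rfl | hp
  · simp
  · rw [log_div hp (h hp), negMulLog]
    ring

section Channel

variable {Y : Type*}

/- For a uniformly distributed input `X`, `jointDist W` is the law of `(Y, X)` and
`outputDist W` the law of `Y`. -/

noncomputable def outputDist (W : Y → ZMod 2 → ℝ) (y : Y) : ℝ := 1 / 2 * (W y 0 + W y 1)

noncomputable def jointDist (W : Y → ZMod 2 → ℝ) (yx : Y × ZMod 2) : ℝ := 1 / 2 * W yx.1 yx.2

lemma sum_jointDist_eq_outputDist (W : Y → ZMod 2 → ℝ) (y : Y) :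
    ∑ x, jointDist W (y, x) = outputDist W y := by
  rw [outputDist, mul_add]
  exact sum_zmod_two _

variable [Fintype Y] {W : Y → ZMod 2 → ℝ}

lemma IsBDMC.sum_outputDist (hW : IsBDMC W) : ∑ y, outputDist W y = 1 := by
  simp only [outputDist, ← mul_sum, sum_add_distrib, hW.2]
  norm_num

lemma IsBDMC.sum_jointDist (hW : IsBDMC W) : ∑ yx, jointDist W yx = 1 := by
  simp only [Fintype.sum_prod_type, sum_jointDist_eq_outputDist, hW.sum_outputDist]

lemma IsBDMC.outputDist_ne_zero (hW : IsBDMC W) {y : Y} {x : ZMod 2} (hx : W y x ≠ 0) :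
    outputDist W y ≠ 0 := by
  have h0 := hW.1 y 0
  have h1 := hW.1 y 1
  have hx' := (hW.1 y x).lt_of_ne' hx
  fin_cases x <;> simp only [outputDist] at hx' ⊢ <;> positivity

lemma IsBDMC.half_mul_log_div_outputDist (hW : IsBDMC W) (y : Y) (x : ZMod 2) :
    1 / 2 * W y x * log (W y x / outputDist W y)
      = 1 / 2 * W y x * log 2 - negMulLog (1 / 2 * W y x)
        - 1 / 2 * W y x * log (outputDist W y) := by
  have hdouble : negMulLog (W y x) = 2 * negMulLog (1 / 2 * W y x) - W y x * log 2 := by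
    conv_lhs => rw [show W y x = 2 * (1 / 2 * W y x) by ring, negMulLog_mul]
    simp only [negMulLog]
    ring
  rw [mul_assoc, mul_log_div_of_ne_zero hW.outputDist_ne_zero, hdouble]
  ring

/-- `I(W) = H(X) + H(Y) - H(X, Y)` with `H(X) = 1` bit. -/
lemma IsBDMC.symCap_eq (hW : IsBDMC W) :
    symCap W = (log 2 + entropy (outputDist W) - entropy (jointDist W)) / log 2 := by
  have hrow : ∀ y, ∑ x, 1 / 2 * W y x * log (W y x / outputDist W y)
      = outputDist W y * log 2 + negMulLog (outputDist W y) - ∑ x, negMulLog (1 / 2 * W y x) := by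
    intro y
    have hsum : ∑ x, 1 / 2 * W y x = outputDist W y := sum_jointDist_eq_outputDist W y
    simp only [hW.half_mul_log_div_outputDist, sum_sub_distrib, ← sum_mul, hsum, negMulLog]
    ring
  change (∑ y, ∑ x, 1 / 2 * W y x * logb 2 (W y x / outputDist W y)) = _
  simp only [logb, ← mul_div_assoc, ← sum_div, hrow, sum_sub_distrib, sum_add_distrib, ← sum_mul,
    hW.sum_outputDist, one_mul, entropy, Fintype.sum_prod_type]
  rfl

end Channel

section Transform

variable {Y1 Y2 : Type*}

/-- The change of variables `(u₁, u₂) ↦ (u₁ + u₂, u₂)` performed by the kernel. -/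
def kernelEquiv : (Y1 × Y2 × ZMod 2) × ZMod 2 ≃ (Y1 × ZMod 2) × (Y2 × ZMod 2) where
  toFun y := ((y.1.1, y.1.2.2 + y.2), (y.1.2.1, y.2))
  invFun z := ((z.1.1, z.2.1, z.1.2 - z.2.2), z.2.2)
  left_inv y := by simp
  right_inv z := by simp

variable (W1 : Y1 → ZMod 2 → ℝ) (W2 : Y2 → ZMod 2 → ℝ)

lemma outputDist_wminus (y : Y1 × Y2) :
    outputDist (Wminus W1 W2) y = outputDist W1 y.1 * outputDist W2 y.2 := by
  simp only [outputDist, Wminus, sum_zmod_two, add_zero, zero_add, CharTwo.add_self_eq_zero]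
  ring

lemma outputDist_wplus :
    outputDist (Wplus W1 W2)
      = jointDist (Wminus W1 W2) ∘ (Equiv.prodAssoc Y1 Y2 (ZMod 2)).symm := by
  funext y
  simp only [outputDist, Wplus, jointDist, Wminus, sum_zmod_two, Function.comp_apply,
    Equiv.prodAssoc_symm_apply]

lemma jointDist_wplus :
    jointDist (Wplus W1 W2)
      = (fun z => jointDist W1 z.1 * jointDist W2 z.2) ∘ kernelEquiv := by
  funext y
  simp only [jointDist, Wplus, kernelEquiv, Function.comp_apply, Equiv.coe_fn_mk]
  ring

variable [Fintype Y1] [Fintype Y2] {W1 W2}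

lemma IsBDMC.wminus (h1 : IsBDMC W1) (h2 : IsBDMC W2) : IsBDMC (Wminus W1 W2) := by
  refine ⟨fun y x => sum_nonneg fun u _ => ?_, fun x => ?_⟩
  · have := h1.1 y.1 (x + u); have := h2.1 y.2 u; positivity
  · simp only [Wminus, Fintype.sum_prod_type, sum_zmod_two, sum_add_distrib, ← mul_sum,
      ← sum_mul, h1.2, h2.2]
    norm_num

lemma IsBDMC.wplus (h1 : IsBDMC W1) (h2 : IsBDMC W2) : IsBDMC (Wplus W1 W2) := by
  refine ⟨fun y x => ?_, fun x => ?_⟩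
  · have := h1.1 y.1 (y.2.2 + x); have := h2.1 y.2.1 x; simp only [Wplus]; positivity
  · simp only [Wplus, Fintype.sum_prod_type, sum_zmod_two, sum_add_distrib, ← mul_sum,
      ← sum_mul, h1.2, h2.2]
    norm_num

lemma entropy_outputDist_wminus (h1 : IsBDMC W1) (h2 : IsBDMC W2) :
    entropy (outputDist (Wminus W1 W2)) = entropy (outputDist W1) + entropy (outputDist W2) := by
  rw [funext (outputDist_wminus W1 W2)]
  exact entropy_mul_of_sum_eq_one h1.sum_outputDist h2.sum_outputDist

lemma entropy_outputDist_wplus :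
    entropy (outputDist (Wplus W1 W2)) = entropy (jointDist (Wminus W1 W2)) := by
  rw [outputDist_wplus, entropy_comp_equiv]

lemma entropy_jointDist_wplus (h1 : IsBDMC W1) (h2 : IsBDMC W2) :
    entropy (jointDist (Wplus W1 W2)) = entropy (jointDist W1) + entropy (jointDist W2) := by
  rw [jointDist_wplus, entropy_comp_equiv]
  exact entropy_mul_of_sum_eq_one h1.sum_jointDist h2.sum_jointDist

end Transform

/-- I(W⁻) + I(W⁺) = I(W1) + I(W2). -/
theorem symCap_kernel_sum {Y1 Y2 : Type*} [Fintype Y1] [Fintype Y2]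
    (W1 : Y1 → ZMod 2 → ℝ) (W2 : Y2 → ZMod 2 → ℝ)
    (h1 : IsBDMC W1) (h2 : IsBDMC W2) :
    symCap (Wminus W1 W2) + symCap (Wplus W1 W2) = symCap W1 + symCap W2 := by
  rw [(h1.wminus h2).symCap_eq, (h1.wplus h2).symCap_eq, h1.symCap_eq, h2.symCap_eq,
    entropy_outputDist_wminus h1 h2, entropy_outputDist_wplus, entropy_jointDist_wplus h1 h2]
  ring
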